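/- arXiv:2503.19919 — 2 statements merged into one kernel-verified Lean document; each statement's English description precedes it below -/
import Mathlib

section
/- For every natural number j there exists a nonzero real constant c such that for all real x, Σ_{k=1}^{2^j} s_k · (x + k)^j = c, where s_k = (−1)^{ν(k−1)} and ν(m) denotes the number of ones in the binary expansion of m. That is, f_j^j is a nonzero constant polynomial. -/
/-!
Since `s (k + 2^n) = -s k` for `1 ≤ k ≤ 2^n`, the sums `f n j x = ∑_{k=1}^{2^n} s k (x + k)^j`
satisfy `f (n+1) j x = f n j x - f n j (x + 2^n)`. Expanding the shifted sum binomially in terms of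
the `f n i` with `i ≤ j`, induction on `n` gives `f n j = 0` for `j < n` and
`f (n+1) (n+1) = -(n+1) 2^n f n n`, so `f n n` is the constant `(-1)^n n! 2^(n choose 2)`.
-/

/-- Thue–Morse sign: `s k = (-1)^(number of ones in binary expansion of k-1)`. -/
def tmSign (k : ℕ) : ℝ := (-1 : ℝ) ^ ((Nat.digits 2 (k - 1)).sum)

open Finset Nat

theorem Nat.digits_sum_add_base_pow_mul {b n m d : ℕ} (hb : 1 < b) (hm : m < b ^ n) :
    (b.digits (m + b ^ n * d)).sum = (b.digits m).sum + (b.digits d).sum := by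
  rcases Nat.eq_zero_or_pos d with rfl | hd
  · simp
  have hlen : (b.digits m).length ≤ n := (Nat.digits_length_le_iff hb m).2 hm
  have hcat := Nat.digits_append_zeroes_append_digits (k := n - (b.digits m).length) (n := m) hb hd
  rw [Nat.add_sub_cancel' hlen] at hcat
  simp [← hcat]

theorem tmSign_add_two_pow {n k : ℕ} (hk : 1 ≤ k) (hkn : k ≤ 2 ^ n) :
    tmSign (k + 2 ^ n) = -tmSign k := by
  have hsum := Nat.digits_sum_add_base_pow_mul (d := 1) one_lt_two (show k - 1 < 2 ^ n by omega)
  rw [mul_one] at hsum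
  rw [tmSign, tmSign, show k + 2 ^ n - 1 = k - 1 + 2 ^ n by omega, hsum]
  simp [pow_succ]

def tmPowSum (n j : ℕ) (x : ℝ) : ℝ := ∑ k ∈ Icc 1 (2 ^ n), tmSign k * (x + k) ^ j

theorem Finset.sum_Icc_one_add_self {M : Type*} [AddCommMonoid M] (f : ℕ → M) (m : ℕ) :
    ∑ k ∈ Icc 1 (m + m), f k = ∑ k ∈ Icc 1 m, f k + ∑ k ∈ Icc 1 m, f (k + m) := by
  rw [← Ico_add_one_right_eq_Icc, ← Ico_add_one_right_eq_Icc, sum_Ico_add', add_comm 1,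
    sum_Ico_consecutive _ (Nat.le_add_left 1 _) (Nat.le_add_right _ _), add_right_comm]

theorem tmPowSum_succ (n j : ℕ) (x : ℝ) :
    tmPowSum (n + 1) j x = tmPowSum n j x - tmPowSum n j (x + 2 ^ n) := by
  rw [tmPowSum, pow_succ, mul_two, sum_Icc_one_add_self, sub_eq_add_neg, tmPowSum, tmPowSum,
    ← sum_neg_distrib]
  congr 1
  refine sum_congr rfl fun k hk => ?_
  rw [mem_Icc] at hk
  rw [tmSign_add_two_pow hk.1 hk.2]
  push_cast
  ring

theorem tmPowSum_add (n j : ℕ) (x h : ℝ) :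
    tmPowSum n j (x + h) = ∑ i ∈ range (j + 1), j.choose i * h ^ (j - i) * tmPowSum n i x := by
  simp only [tmPowSum, mul_sum]
  rw [sum_comm]
  refine sum_congr rfl fun k _ => ?_
  rw [show x + h + k = (x + k) + h by ring, add_pow, mul_sum]
  exact sum_congr rfl fun i _ => by ring

theorem tmPowSum_eq_zero_of_lt {n j : ℕ} (hj : j < n) (x : ℝ) : tmPowSum n j x = 0 := by
  induction n generalizing j x with
  | zero => omega
  | succ n ih =>
    have hvanish : ∀ i ∈ range j, (j.choose i : ℝ) * (2 ^ n) ^ (j - i) * tmPowSum n i x = 0 :=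
      fun i hi => by rw [ih (by rw [mem_range] at hi; omega), mul_zero]
    rw [tmPowSum_succ, tmPowSum_add, sum_range_succ, sum_eq_zero hvanish]
    simp

theorem tmPowSum_self (n : ℕ) (x : ℝ) :
    tmPowSum n n x = (-1) ^ n * n ! * 2 ^ n.choose 2 := by
  induction n generalizing x with
  | zero => simp [tmPowSum, tmSign]
  | succ n ih =>
    have hvanish : ∀ i ∈ range n,
        ((n + 1).choose i : ℝ) * (2 ^ n) ^ (n + 1 - i) * tmPowSum n i x = 0 :=
      fun i hi => by rw [tmPowSum_eq_zero_of_lt (by simpa using hi), mul_zero]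
    rw [tmPowSum_succ, tmPowSum_add, sum_range_succ, sum_range_succ, sum_eq_zero hvanish, ih,
      Nat.choose_succ_self_right, Nat.choose_self, Nat.choose_succ_succ', Nat.choose_one_right,
      Nat.factorial_succ, show n + 1 - n = 1 by omega, Nat.sub_self]
    push_cast
    ring

theorem stmt2 (j : ℕ) :
    ∃ c : ℝ, c ≠ 0 ∧ ∀ x : ℝ,
      ∑ k ∈ Finset.Icc 1 (2 ^ j), tmSign k * (x + k) ^ j = c :=
  ⟨_, by positivity, tmPowSum_self j⟩
end

section
/- Let n be a natural number and let m be any integer. Define S₁ = {k : 1 ≤ k ≤ 2^n, s_k = 1} and S₂ = {k : 1 ≤ k ≤ 2^n, s_k = −1}, where s_k = (−1)^{ν(k−1)} and ν(a) is the number of ones in the binary expansion of a. Then for every natural number j with j < n, Σ_{k ∈ S₁} (m + k)^j = Σ_{k ∈ S₂} (m + k)^j. In particular, any 2^n consecutive integers can be partitioned into two sets whose sums of j-th powers agree for all j = 0, 1, …, n−1. -/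
/-!
Write `ε k = (-1)^ν(k)`, so that `s_k = ε (k - 1)`. Since `ε (2^n + k) = -ε k` for `k < 2^n`,
the signed sum `∑_{k < 2^(n+1)} ε k (x + k)^j` equals `∑_{k < 2^n} ε k ((x + k)^j - (x + 2^n + k)^j)`,
and by the binomial theorem the difference of powers is a combination of the powers `(x + k)^i`
with `i < j`. Induction on `n` therefore kills every power `j < n`.
-/

open Finset

theorem Nat.digits_sum_add_base_pow {b n k : ℕ} (hb : 1 < b) (hk : k < b ^ n) :
    (Nat.digits b (k + b ^ n)).sum = (Nat.digits b k).sum + 1 := by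
  have hlen : (Nat.digits b k).length ≤ n := (Nat.digits_length_le_iff hb k).mpr hk
  have h := Nat.digits_append_zeroes_append_digits (k := n - (Nat.digits b k).length)
    (n := k) hb one_pos
  rw [Nat.add_sub_cancel' hlen, mul_one] at h
  simp [← h, Nat.digits_of_lt b 1 one_ne_zero hb]

def thueMorseSign (k : ℕ) : ℤ := (-1) ^ (Nat.digits 2 k).sum

theorem thueMorseSign_eq_one_or_neg_one (k : ℕ) : thueMorseSign k = 1 ∨ thueMorseSign k = -1 :=
  neg_one_pow_eq_or ℤ _

theorem thueMorseSign_two_pow_add {n k : ℕ} (hk : k < 2 ^ n) :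
    thueMorseSign (2 ^ n + k) = -thueMorseSign k := by
  rw [thueMorseSign, thueMorseSign, add_comm, Nat.digits_sum_add_base_pow one_lt_two hk, pow_succ,
    mul_neg_one]

theorem tmSign_eq_thueMorseSign (k : ℕ) : tmSign k = thueMorseSign (k - 1) := by
  simp [tmSign, thueMorseSign]

theorem add_pow_sub_pow {R : Type*} [CommRing R] (x y : R) (j : ℕ) :
    (x + y) ^ j - x ^ j = ∑ i ∈ range j, x ^ i * y ^ (j - i) * j.choose i := by
  simp [add_pow, sum_range_succ]

theorem sum_range_thueMorseSign_mul_add_pow {R : Type*} [CommRing R] {n j : ℕ} (hj : j < n)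
    (x : R) : ∑ k ∈ range (2 ^ n), thueMorseSign k * (x + k) ^ j = 0 := by
  induction n generalizing j x with
  | zero => omega
  | succ n ih =>
    have hsplit : ∑ k ∈ range (2 ^ (n + 1)), thueMorseSign k * (x + k) ^ j
        = -∑ k ∈ range (2 ^ n), thueMorseSign k * (((x + k) + 2 ^ n) ^ j - (x + k) ^ j) := by
      rw [pow_succ, mul_two, sum_range_add, ← sum_neg_distrib, ← sum_add_distrib]
      refine sum_congr rfl fun k hk => ?_
      rw [thueMorseSign_two_pow_add (mem_range.mp hk)]
      push_cast
      ring
    have hexpand : ∑ k ∈ range (2 ^ n), thueMorseSign k * (((x + k) + 2 ^ n) ^ j - (x + k) ^ j)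
        = ∑ i ∈ range j, (2 ^ n) ^ (j - i) * j.choose i *
            ∑ k ∈ range (2 ^ n), thueMorseSign k * (x + k) ^ i := by
      simp_rw [add_pow_sub_pow, mul_sum]
      rw [sum_comm]
      exact sum_congr rfl fun _ _ => sum_congr rfl fun _ _ => by ring
    rw [hsplit, hexpand, neg_eq_zero]
    exact sum_eq_zero fun i hi => by rw [ih (by grind) x, mul_zero]

theorem sum_filter_sub_sum_filter_eq_sum_mul {ι R : Type*} [CommRing R] {s : Finset ι}
    {σ : ι → ℤ} (hσ : ∀ i ∈ s, σ i = 1 ∨ σ i = -1) (f : ι → R) :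
    ∑ i ∈ s with σ i = 1, f i - ∑ i ∈ s with σ i = -1, f i = ∑ i ∈ s, σ i * f i := by
  rw [sum_filter, sum_filter, ← sum_sub_distrib]
  refine sum_congr rfl fun i hi => ?_
  rcases hσ i hi with h | h <;> simp [h]

theorem stmt7 (n : ℕ) (m : ℤ) (j : ℕ) (hj : j < n) :
    ∑ k ∈ (Finset.Icc 1 (2 ^ n)).filter (fun k => tmSign k = 1), (m + k) ^ j
      = ∑ k ∈ (Finset.Icc 1 (2 ^ n)).filter (fun k => tmSign k = -1), (m + k) ^ j := by
  have hcast (k : ℕ) (a : ℤ) : tmSign k = a ↔ thueMorseSign (k - 1) = a := by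
    rw [tmSign_eq_thueMorseSign, Int.cast_inj]
  have hreindex : ∑ k ∈ Icc 1 (2 ^ n), thueMorseSign (k - 1) * (m + k) ^ j
      = ∑ k ∈ range (2 ^ n), thueMorseSign k * ((m + 1) + k) ^ j := by
    rw [← Ico_add_one_right_eq_Icc, sum_Ico_eq_sum_range, Nat.add_sub_cancel]
    exact sum_congr rfl fun k _ => by rw [Nat.add_sub_cancel_left]; push_cast; ring
  rw [← sub_eq_zero]
  simp only [← Int.cast_one (R := ℝ), ← Int.cast_neg, hcast]
  rw [sum_filter_sub_sum_filter_eq_sum_mul fun k _ => thueMorseSign_eq_one_or_neg_one (k - 1)]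
  exact hreindex.trans (sum_range_thueMorseSign_mul_add_pow hj (m + 1))
end
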